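/- arXiv:2506.22093 — 3 statements merged into one kernel-verified Lean document; each statement's English description precedes it below -/
import Mathlib

section
/- Let X be a topological space equipped with a Borel measure μ of full support (every nonempty open set has positive measure). Let d₁ and d₂ be two metrics on X, each of which induces the given topology of X. Suppose that for all open sets A, B ⊆ X with μ(A) > 0 and μ(B) > 0 one has inf{d₁(x,y) : x ∈ A, y ∈ B} = inf{d₂(x,y) : x ∈ A, y ∈ B}. Then d₁(x,y) = d₂(x,y) for all x, y ∈ X. -/
open MeasureTheory Set

/-- The set distance `d(A,B) = inf {d(x,y) : x ∈ A, y ∈ B}` associated to a point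
function `dd : X → X → ℝ`. -/
noncomputable def setDistOf {X : Type*} (dd : X → X → ℝ) (A B : Set X) : ℝ :=
  sInf {r : ℝ | ∃ x ∈ A, ∃ y ∈ B, dd x y = r}

/-- On a topological space carrying a Borel measure of full support, two
metrics inducing the given topology whose set distances agree on all pairs of open sets
of positive measure must coincide. -/
theorem stmt0 {X : Type*} [TopologicalSpace X] [MeasurableSpace X] [BorelSpace X]
    (μ : Measure X)
    -- μ has full support
    (hfull : ∀ U : Set X, IsOpen U → U.Nonempty → 0 < μ U)
    (d₁ d₂ : X → X → ℝ)
    -- d₁ is a metric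
    (h1refl : ∀ x, d₁ x x = 0) (h1eq : ∀ x y, d₁ x y = 0 → x = y)
    (h1symm : ∀ x y, d₁ x y = d₁ y x) (h1tri : ∀ x y z, d₁ x z ≤ d₁ x y + d₁ y z)
    -- d₂ is a metric
    (h2refl : ∀ x, d₂ x x = 0) (h2eq : ∀ x y, d₂ x y = 0 → x = y)
    (h2symm : ∀ x y, d₂ x y = d₂ y x) (h2tri : ∀ x y z, d₂ x z ≤ d₂ x y + d₂ y z)
    -- both metrics induce the given topology of X
    (htop1 : ∀ s : Set X, IsOpen s ↔ ∀ x ∈ s, ∃ ε > (0:ℝ), {y | d₁ x y < ε} ⊆ s)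
    (htop2 : ∀ s : Set X, IsOpen s ↔ ∀ x ∈ s, ∃ ε > (0:ℝ), {y | d₂ x y < ε} ⊆ s)
    -- the induced set distances coincide on open sets of positive measure
    (hset : ∀ A B : Set X, IsOpen A → IsOpen B → 0 < μ A → 0 < μ B →
      setDistOf d₁ A B = setDistOf d₂ A B) :
    ∀ x y : X, d₁ x y = d₂ x y := by
  have h1nn : ∀ x y, 0 ≤ d₁ x y := fun x y => by nlinarith [h1tri x y x, h1refl x, h1symm x y]
  have h2nn : ∀ x y, 0 ≤ d₂ x y := fun x y => by nlinarith [h2tri x y x, h2refl x, h2symm x y]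
  have key : ∀ (e f : X → X → ℝ),
      (∀ x y, 0 ≤ e x y) → (∀ x, f x x = 0) → (∀ x y, f x y = f y x) →
      (∀ x y z, f x z ≤ f x y + f y z) →
      (∀ s : Set X, IsOpen s ↔ ∀ x ∈ s, ∃ ε > (0:ℝ), {y | f x y < ε} ⊆ s) →
      (∀ A B : Set X, IsOpen A → IsOpen B → 0 < μ A → 0 < μ B →
        setDistOf e A B = setDistOf f A B) →
      ∀ x y, f x y ≤ e x y := by
    intro e f hen hfr hfs hft hfo hEF x y
    refine le_of_forall_pos_le_add (fun ε hε => ?_)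
    set A : Set X := {z | f x z < ε / 2} with hA
    set B : Set X := {z | f y z < ε / 2} with hB
    have hball : ∀ c : X, IsOpen {z | f c z < ε / 2} := by
      intro c
      rw [hfo]
      intro a ha
      refine ⟨ε / 2 - f c a, by simp only [Set.mem_setOf_eq] at ha; linarith, fun w hw => ?_⟩
      simp only [Set.mem_setOf_eq] at hw ⊢
      have := hft c a w
      linarith
    have hAo : IsOpen A := hball x
    have hBo : IsOpen B := hball y
    have hxA : x ∈ A := by simp [hA, hfr x, half_pos hε]
    have hyB : y ∈ B := by simp [hB, hfr y, half_pos hε]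
    have hAμ : 0 < μ A := hfull A hAo ⟨x, hxA⟩
    have hBμ : 0 < μ B := hfull B hBo ⟨y, hyB⟩
    have hmem : e x y ∈ {r : ℝ | ∃ a ∈ A, ∃ b ∈ B, e a b = r} := ⟨x, hxA, y, hyB, rfl⟩
    have hbdd : BddBelow {r : ℝ | ∃ a ∈ A, ∃ b ∈ B, e a b = r} := by
      refine ⟨0, fun r hr => ?_⟩
      obtain ⟨a, _, b, _, rfl⟩ := hr
      exact hen a b
    have h1 : setDistOf e A B ≤ e x y := csInf_le hbdd hmem
    have h2 : f x y - ε ≤ setDistOf f A B := by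
      refine le_csInf ⟨f x y, x, hxA, y, hyB, rfl⟩ (fun r hr => ?_)
      obtain ⟨a, ha, b, hb, rfl⟩ := hr
      have hxy : f x y ≤ f x a + f a b + f b y := by
        have := hft x a b
        have := hft x b y
        linarith [hft x a b, hft x b y]
      have hby : f b y < ε / 2 := by rw [hfs b y]; exact hb
      simp only [hA, Set.mem_setOf_eq] at ha
      linarith
    have heq := hEF A B hAo hBo hAμ hBμ
    unfold setDistOf at heq h1 h2
    linarith
  intro x y
  have hle1 : d₂ x y ≤ d₁ x y := key d₁ d₂ h1nn h2refl h2symm h2tri htop2 hset x y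
  have hle2 : d₁ x y ≤ d₂ x y :=
    key d₂ d₁ h2nn h1refl h1symm h1tri htop1
      (fun A B hA hB hAμ hBμ => (hset A B hA hB hAμ hBμ).symm) x y
  linarith
end

section
/- With the domain setup below, for every a > 0 and all x, y ∈ Ω one has min{1, 1/a} · d_Ω(x,y)² ≤ 2 · d_a(x,y)² ≤ max{1, 1/a} · d_Ω(x,y)². In particular, d_a is bi-Lipschitz equivalent to the geodesic distance d_Ω on Ω. -/
open MeasureTheory Set
open scoped ENNReal

noncomputable section

abbrev Euc (d : ℕ) := EuclideanSpace ℝ (Fin d)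

/-- A Lipschitz path in `S` from `x` to `y`, parametrized over `[0,1]`. -/
def IsPathIn {d : ℕ} (S : Set (Euc d)) (x y : Euc d) (X : ℝ → Euc d) : Prop :=
  (∃ K : NNReal, LipschitzWith K X) ∧ (∀ t ∈ Icc (0:ℝ) 1, X t ∈ S) ∧ X 0 = x ∧ X 1 = y

/-- Euclidean length of a path. -/
def pathLength {d : ℕ} (X : ℝ → Euc d) : ℝ≥0∞ :=
  ∫⁻ t in Ioo (0:ℝ) 1, ENNReal.ofReal ‖deriv X t‖

/-- Kinetic energy of a path. -/
def pathEnergy {d : ℕ} (X : ℝ → Euc d) : ℝ≥0∞ :=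
  ∫⁻ t in Ioo (0:ℝ) 1, ENNReal.ofReal (‖deriv X t‖ ^ 2)

/-- Geodesic distance in `S` (inf over the empty set is `⊤`). -/
def dGeo {d : ℕ} (S : Set (Euc d)) (x y : Euc d) : ℝ≥0∞ :=
  ⨅ X : {X : ℝ → Euc d // IsPathIn S x y X}, pathLength X.1

/-- Minimal energy in `S`. -/
def eGeo {d : ℕ} (S : Set (Euc d)) (x y : Euc d) : ℝ≥0∞ :=
  ⨅ X : {X : ℝ → Euc d // IsPathIn S x y X}, pathEnergy X.1

/-- The Lagrangian `L_a`. -/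
def La {d : ℕ} (Φ : Euc d → ℝ) (a : ℝ) (x v : Euc d) : ℝ≥0∞ :=
  if Φ x < 0 then ENNReal.ofReal (‖v‖ ^ 2 / 2)
  else if Φ x = 0 ∧ inner ℝ (gradient Φ x) v = (0:ℝ) then ENNReal.ofReal (‖v‖ ^ 2 / (2 * a))
  else ⊤

/-- Action of a path for the Lagrangian `L_a`. -/
def actionA {d : ℕ} (Φ : Euc d → ℝ) (a : ℝ) (X : ℝ → Euc d) : ℝ≥0∞ :=
  ∫⁻ t in Ioo (0:ℝ) 1, La Φ a (X t) (deriv X t)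

/-- The squared distance `d_a²`. -/
def daSq {d : ℕ} (Φ : Euc d → ℝ) (a : ℝ) (x y : Euc d) : ℝ≥0∞ :=
  ⨅ X : {X : ℝ → Euc d // IsPathIn {z | Φ z ≤ 0} x y X}, actionA Φ a X.1

/-!
Pointwise, `min 1 (1/a) ‖v‖² ≤ 2 L_a(z, v)`, and `2 L_a(z, v) ≤ max 1 (1/a) ‖v‖²` whenever `v` is
tangent to `∂Ω` at boundary points `z`. The velocities of a path in `Ω` are automatically
tangent where the path touches `∂Ω` at an interior time, because `Φ ∘ X` attains its maximum `0`
there. Integrating, the action of a path is comparable to its energy, and energy and squared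
length are comparable: Cauchy–Schwarz gives `length² ≤ energy`, and reparametrizing a path by the
arc length `t ↦ ∫₀ᵗ ‖X'‖` makes it `length`-Lipschitz, hence `energy ≤ length²`. That the arc
length controls the displacement of a Lipschitz path is the fundamental theorem of calculus for
absolutely continuous functions, applied to `t ↦ ⟪X v - X u, X t⟫` on `[u, v]`.
-/

theorem ENNReal.iInf_pow {ι : Sort*} (f : ι → ℝ≥0∞) {n : ℕ} (hn : n ≠ 0) :
    (⨅ i, f i) ^ n = ⨅ i, f i ^ n :=
  Monotone.map_iInf_of_continuousAt (f := fun x : ℝ≥0∞ => x ^ n)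
    (ENNReal.continuous_pow n).continuousAt (fun _ _ h => pow_le_pow_left' h n)
    (ENNReal.top_pow hn)

theorem sq_lintegral_le_lintegral_sq {α : Type*} [MeasurableSpace α] (μ : Measure α)
    [IsProbabilityMeasure μ] {f : α → ℝ≥0∞} (hf : AEMeasurable f μ) :
    (∫⁻ x, f x ∂μ) ^ 2 ≤ ∫⁻ x, f x ^ 2 ∂μ := by
  have hconj : Real.HolderConjugate 2 2 := ⟨by norm_num, by norm_num, by norm_num⟩
  have H := ENNReal.lintegral_mul_le_Lp_mul_Lq μ hconj hf aemeasurable_const (g := 1)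
  simp only [Pi.mul_apply, Pi.one_apply, mul_one, ENNReal.one_rpow, lintegral_const,
    measure_univ] at H
  calc (∫⁻ x, f x ∂μ) ^ 2 ≤ ((∫⁻ x, f x ^ (2 : ℝ) ∂μ) ^ (1 / 2 : ℝ)) ^ 2 := by
        simpa using pow_le_pow_left' H 2
    _ = ∫⁻ x, f x ^ 2 ∂μ := by
        rw [← ENNReal.rpow_natCast _ 2, ← ENNReal.rpow_mul]
        norm_num

theorem LipschitzWith.intervalIntegrable_deriv {F : Type*} [NormedAddCommGroup F]
    [NormedSpace ℝ F] [CompleteSpace F] {K : NNReal} {f : ℝ → F} (hf : LipschitzWith K f)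
    (a b : ℝ) : IntervalIntegrable (deriv f) volume a b :=
  (intervalIntegrable_const (c := (K : ℝ))).mono_fun' (aestronglyMeasurable_deriv f _)
    (Filter.Eventually.of_forall fun _ => norm_deriv_le_of_lipschitz hf)

theorem LipschitzWith.norm_sub_le_integral_norm_deriv {E : Type*} [NormedAddCommGroup E]
    [InnerProductSpace ℝ E] [FiniteDimensional ℝ E] {K : NNReal} {f : ℝ → E}
    (hf : LipschitzWith K f) {a b : ℝ} (hab : a ≤ b) :
    ‖f b - f a‖ ≤ ∫ t in a..b, ‖deriv f t‖ := by
  set e := f b - f a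
  set g : ℝ → ℝ := fun t => inner ℝ e (f t)
  have hg : LipschitzWith (‖innerSL ℝ e‖₊ * K) g := (innerSL ℝ e).lipschitz.comp hf
  have hftc : ∫ t in a..b, deriv g t = ‖e‖ ^ 2 := by
    rw [hg.lipschitzOnWith.absolutelyContinuousOnInterval.integral_deriv_eq_sub,
      ← inner_sub_right, real_inner_self_eq_norm_sq]
  have hderiv : ∀ᵐ t, deriv g t ≤ ‖e‖ * ‖deriv f t‖ := by
    filter_upwards [hf.ae_differentiableAt_real] with t ht
    have hgt : HasDerivAt g (inner ℝ e (deriv f t)) t :=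
      (innerSL ℝ e).hasFDerivAt.comp_hasDerivAt t ht.hasDerivAt
    rw [hgt.deriv]
    exact real_inner_le_norm _ _
  have hsq : ‖e‖ * ‖e‖ ≤ ‖e‖ * ∫ t in a..b, ‖deriv f t‖ := by
    calc ‖e‖ * ‖e‖ = ∫ t in a..b, deriv g t := by rw [hftc, sq]
      _ ≤ ∫ t in a..b, ‖e‖ * ‖deriv f t‖ :=
          intervalIntegral.integral_mono_ae hab (hg.intervalIntegrable_deriv a b)
            ((hf.intervalIntegrable_deriv a b).norm.const_mul _) hderiv
      _ = ‖e‖ * ∫ t in a..b, ‖deriv f t‖ := intervalIntegral.integral_const_mul _ _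
  rcases (norm_nonneg e).eq_or_lt with he | he
  · rw [← he]
    exact intervalIntegral.integral_nonneg hab fun t _ => norm_nonneg _
  · exact le_of_mul_le_mul_left hsq he

theorem exists_lipschitzWith_reparam {E : Type*} [MetricSpace E] {X : ℝ → E} {ℓ : ℝ → ℝ}
    (hℓ : ContinuousOn ℓ (Icc 0 1))
    (hX : ∀ u ∈ Icc (0 : ℝ) 1, ∀ v ∈ Icc (0 : ℝ) 1, u ≤ v → dist (X u) (X v) ≤ ℓ v - ℓ u) :
    ∃ τ : ℝ → ℝ, (∀ s, τ s ∈ Icc (0 : ℝ) 1) ∧ X (τ 0) = X 0 ∧ X (τ 1) = X 1 ∧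
      LipschitzWith (ℓ 1 - ℓ 0).toNNReal (X ∘ τ) := by
  set L := ℓ 1 - ℓ 0
  have hL : 0 ≤ L := dist_nonneg.trans (hX 0 (by simp) 1 (by simp) zero_le_one)
  -- `σ c` is a time at which the path has travelled the fraction `c` of its total budget `L`
  have hivt : ∀ c : Icc (0 : ℝ) 1, ∃ t ∈ Icc (0 : ℝ) 1, ℓ t = ℓ 0 + L * c := fun c =>
    intermediate_value_Icc zero_le_one hℓ
      ⟨by nlinarith [c.2.1], by nlinarith [c.2.2]⟩
  choose σ hσmem hσ using hivt
  have hσlip : LipschitzWith L.toNNReal fun c => X (σ c) := by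
    refine LipschitzWith.of_dist_le_mul fun c c' => ?_
    rw [Real.coe_toNNReal _ hL, Subtype.dist_eq, Real.dist_eq]
    rcases le_total (σ c) (σ c') with h | h
    · calc dist (X (σ c)) (X (σ c')) ≤ ℓ (σ c') - ℓ (σ c) := hX _ (hσmem c) _ (hσmem c') h
        _ = L * ((c' : ℝ) - c) := by rw [hσ, hσ]; ring
        _ ≤ L * |(c : ℝ) - c'| := by gcongr; exact (le_abs_self _).trans (abs_sub_comm _ _).le
    · calc dist (X (σ c)) (X (σ c')) ≤ ℓ (σ c) - ℓ (σ c') := by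
            rw [dist_comm]; exact hX _ (hσmem c') _ (hσmem c) h
        _ = L * ((c : ℝ) - c') := by rw [hσ, hσ]; ring
        _ ≤ L * |(c : ℝ) - c'| := by gcongr; exact le_abs_self _
  refine ⟨fun s => σ (projIcc 0 1 zero_le_one s), fun s => hσmem _, ?_, ?_, ?_⟩
  · apply dist_le_zero.mp
    have h0 := hX 0 (by simp) _ (hσmem (projIcc 0 1 zero_le_one 0))
      (hσmem (projIcc 0 1 zero_le_one 0)).1
    simp only [projIcc_left, hσ, mul_zero, add_zero, sub_self] at h0
    rwa [dist_comm, ← projIcc_left] at h0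
  · apply dist_le_zero.mp
    have h1 := hX _ (hσmem (projIcc 0 1 zero_le_one 1)) 1 (by simp)
      (hσmem (projIcc 0 1 zero_le_one 1)).2
    simpa only [projIcc_right, hσ, mul_one, L, sub_self, add_sub_cancel] using h1
  · simpa [Function.comp_def] using hσlip.comp (LipschitzWith.projIcc zero_le_one)

section Paths

variable {d : ℕ}

theorem sq_pathLength_le_pathEnergy (X : ℝ → Euc d) : pathLength X ^ 2 ≤ pathEnergy X := by
  have : IsProbabilityMeasure (volume.restrict (Ioo (0 : ℝ) 1)) :=
    ⟨by simp [Real.volume_Ioo]⟩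
  calc pathLength X ^ 2 ≤ ∫⁻ t in Ioo (0 : ℝ) 1, ENNReal.ofReal ‖deriv X t‖ ^ 2 :=
        sq_lintegral_le_lintegral_sq _ (measurable_deriv X).norm.ennreal_ofReal.aemeasurable
    _ = pathEnergy X := by simp_rw [← ENNReal.ofReal_pow (norm_nonneg _)]; rfl

theorem LipschitzWith.pathEnergy_le {K : NNReal} {X : ℝ → Euc d} (hX : LipschitzWith K X) :
    pathEnergy X ≤ (K : ℝ≥0∞) ^ 2 :=
  calc pathEnergy X ≤ ∫⁻ _ in Ioo (0 : ℝ) 1, ENNReal.ofReal ((K : ℝ) ^ 2) := by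
        refine lintegral_mono fun t => ENNReal.ofReal_le_ofReal ?_
        gcongr
        exact norm_deriv_le_of_lipschitz hX
    _ = (K : ℝ≥0∞) ^ 2 := by simp [Real.volume_Ioo, ENNReal.ofReal_pow]

theorem LipschitzWith.pathLength_eq {K : NNReal} {X : ℝ → Euc d} (hX : LipschitzWith K X) :
    pathLength X = ENNReal.ofReal (∫ t in (0 : ℝ)..1, ‖deriv X t‖) := by
  rw [pathLength, setLIntegral_congr Ioo_ae_eq_Ioc, intervalIntegral.integral_of_le zero_le_one,
    ofReal_integral_eq_lintegral_ofReal]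
  · exact (hX.intervalIntegrable_deriv 0 1).norm.1
  · exact Filter.Eventually.of_forall fun _ => norm_nonneg _

theorem IsPathIn.exists_pathEnergy_le_sq_pathLength {S : Set (Euc d)} {x y : Euc d}
    {X : ℝ → Euc d} (hX : IsPathIn S x y X) :
    ∃ Y, IsPathIn S x y Y ∧ pathEnergy Y ≤ pathLength X ^ 2 := by
  obtain ⟨⟨K, hK⟩, hmem, rfl, rfl⟩ := hX
  set ℓ : ℝ → ℝ := fun t => ∫ u in (0 : ℝ)..t, ‖deriv X u‖
  have hint : ∀ u v, IntervalIntegrable (fun t => ‖deriv X t‖) volume u v := fun u v =>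
    (hK.intervalIntegrable_deriv u v).norm
  have hℓ : ContinuousOn ℓ (Icc 0 1) :=
    (intervalIntegral.continuous_primitive hint 0).continuousOn
  have hdisp : ∀ u ∈ Icc (0 : ℝ) 1, ∀ v ∈ Icc (0 : ℝ) 1, u ≤ v → dist (X u) (X v) ≤ ℓ v - ℓ u :=
    fun u _ v _ huv => by
      rw [dist_comm, dist_eq_norm,
        intervalIntegral.integral_interval_sub_left (hint 0 v) (hint 0 u)]
      exact hK.norm_sub_le_integral_norm_deriv huv
  obtain ⟨τ, hτ, hτ0, hτ1, hlip⟩ := exists_lipschitzWith_reparam hℓ hdisp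
  refine ⟨X ∘ τ, ⟨⟨_, hlip⟩, fun t _ => hmem _ (hτ t), hτ0, hτ1⟩, ?_⟩
  calc pathEnergy (X ∘ τ) ≤ ((ℓ 1 - ℓ 0).toNNReal : ℝ≥0∞) ^ 2 := hlip.pathEnergy_le
    _ = pathLength X ^ 2 := by simp [ℓ, hK.pathLength_eq, ENNReal.ofReal]

end Paths

theorem inner_gradient_deriv_eq_zero_of_isLocalMax {E : Type*} [NormedAddCommGroup E]
    [InnerProductSpace ℝ E] [CompleteSpace E] {Φ : E → ℝ} {X : ℝ → E} {t : ℝ}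
    (hΦ : DifferentiableAt ℝ Φ (X t)) (hmax : IsLocalMax (Φ ∘ X) t) :
    inner ℝ (gradient Φ (X t)) (deriv X t) = (0 : ℝ) := by
  by_cases hX : DifferentiableAt ℝ X t
  · refine hmax.hasDerivAt_eq_zero ?_
    have := hΦ.hasGradientAt.hasFDerivAt.comp_hasDerivAt t hX.hasDerivAt
    rwa [InnerProductSpace.toDual_apply_apply] at this
  · rw [deriv_zero_of_not_differentiableAt hX, inner_zero_right]

section Lagrangian

variable {d : ℕ} (Φ : Euc d → ℝ) {a : ℝ}

theorem two_mul_ofReal_div_two_mul (ha : 0 < a) (s : ℝ) :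
    2 * ENNReal.ofReal (s / (2 * a)) = ENNReal.ofReal (1 / a) * ENNReal.ofReal s := by
  rw [← ENNReal.ofReal_ofNat, ← ENNReal.ofReal_mul zero_le_two,
    ← ENNReal.ofReal_mul (by positivity)]
  congr 1
  field_simp

theorem two_mul_ofReal_div_two (s : ℝ) : 2 * ENNReal.ofReal (s / 2) = ENNReal.ofReal s := by
  simpa using two_mul_ofReal_div_two_mul one_pos s

theorem min_mul_le_two_mul_La (ha : 0 < a) (z v : Euc d) :
    min 1 (ENNReal.ofReal (1 / a)) * ENNReal.ofReal (‖v‖ ^ 2) ≤ 2 * La Φ a z v := by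
  unfold La
  split_ifs
  · rw [two_mul_ofReal_div_two]
    exact mul_le_of_le_one_left' (min_le_left _ _)
  · rw [two_mul_ofReal_div_two_mul ha]
    gcongr
    exact min_le_right _ _
  · simp

theorem two_mul_La_le_max_mul (ha : 0 < a) {z : Euc d} (hz : Φ z ≤ 0) (v : Euc d)
    (htan : Φ z = 0 → inner ℝ (gradient Φ z) v = (0 : ℝ)) :
    2 * La Φ a z v ≤ max 1 (ENNReal.ofReal (1 / a)) * ENNReal.ofReal (‖v‖ ^ 2) := by
  unfold La
  split_ifs with hneg hbdry
  · rw [two_mul_ofReal_div_two]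
    exact le_mul_of_one_le_left' (le_max_left _ _)
  · rw [two_mul_ofReal_div_two_mul ha]
    gcongr
    exact le_max_right _ _
  · have hz0 : Φ z = 0 := hz.antisymm (not_lt.mp hneg)
    exact absurd ⟨hz0, htan hz0⟩ hbdry

theorem min_mul_pathEnergy_le_two_mul_actionA (ha : 0 < a) (X : ℝ → Euc d) :
    min 1 (ENNReal.ofReal (1 / a)) * pathEnergy X ≤ 2 * actionA Φ a X := by
  rw [pathEnergy, actionA, ← lintegral_const_mul' _ _ (by simp),
    ← lintegral_const_mul' _ _ (by simp)]
  exact lintegral_mono fun t => min_mul_le_two_mul_La Φ ha _ _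

theorem two_mul_actionA_le_max_mul_pathEnergy (hΦ : Differentiable ℝ Φ) (ha : 0 < a)
    {X : ℝ → Euc d} (hX : ∀ t ∈ Icc (0 : ℝ) 1, Φ (X t) ≤ 0) :
    2 * actionA Φ a X ≤ max 1 (ENNReal.ofReal (1 / a)) * pathEnergy X := by
  rw [pathEnergy, actionA, ← lintegral_const_mul' _ _ (by simp),
    ← lintegral_const_mul' _ _ (by simp)]
  refine setLIntegral_mono' measurableSet_Ioo fun t ht => ?_
  refine two_mul_La_le_max_mul Φ ha (hX t (Ioo_subset_Icc_self ht)) _ fun h0 => ?_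
  refine inner_gradient_deriv_eq_zero_of_isLocalMax (hΦ _) ?_
  filter_upwards [Icc_mem_nhds ht.1 ht.2] with s hs
  simpa [h0] using hX s hs

end Lagrangian

theorem stmt5_general {d : ℕ} (Φ : Euc d → ℝ) (hΦ : ContDiff ℝ (⊤ : ℕ∞) Φ)
    (a : ℝ) (ha : 0 < a) (x y : Euc d) :
    min 1 (ENNReal.ofReal (1 / a)) * (dGeo {z : Euc d | Φ z ≤ 0} x y) ^ 2
        ≤ 2 * daSq Φ a x y ∧
    2 * daSq Φ a x y
        ≤ max 1 (ENNReal.ofReal (1 / a)) * (dGeo {z : Euc d | Φ z ≤ 0} x y) ^ 2 := by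
  constructor
  · rw [daSq, ENNReal.mul_iInf_of_ne two_ne_zero ENNReal.ofNat_ne_top]
    refine le_iInf fun X => ?_
    calc min 1 (ENNReal.ofReal (1 / a)) * dGeo {z | Φ z ≤ 0} x y ^ 2
        ≤ min 1 (ENNReal.ofReal (1 / a)) * pathLength X.1 ^ 2 := by gcongr; exact iInf_le _ X
      _ ≤ min 1 (ENNReal.ofReal (1 / a)) * pathEnergy X.1 := by
        gcongr; exact sq_pathLength_le_pathEnergy _
      _ ≤ 2 * actionA Φ a X.1 := min_mul_pathEnergy_le_two_mul_actionA Φ ha X.1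
  · rw [dGeo, ENNReal.iInf_pow _ two_ne_zero,
      ENNReal.mul_iInf_of_ne (by simp) (by simp)]
    refine le_iInf fun X => ?_
    obtain ⟨Y, hY, hYX⟩ := X.2.exists_pathEnergy_le_sq_pathLength
    calc 2 * daSq Φ a x y ≤ 2 * actionA Φ a Y := by gcongr; exact iInf_le_of_le ⟨Y, hY⟩ le_rfl
      _ ≤ max 1 (ENNReal.ofReal (1 / a)) * pathEnergy Y :=
        two_mul_actionA_le_max_mul_pathEnergy Φ (hΦ.differentiable (by simp)) ha hY.2.1
      _ ≤ max 1 (ENNReal.ofReal (1 / a)) * pathLength X.1 ^ 2 := by gcongr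

/-- With the smooth compact domain setup, for every `a > 0` and all
`x, y ∈ Ω` one has `min {1, 1/a} · d_Ω(x,y)² ≤ 2 · d_a(x,y)² ≤ max {1, 1/a} · d_Ω(x,y)²`;
in particular `d_a` is bi-Lipschitz equivalent to the geodesic distance `d_Ω`. -/
theorem stmt5 {d : ℕ} (hd : 2 ≤ d) (Φ : Euc d → ℝ) (hΦ : ContDiff ℝ (⊤ : ℕ∞) Φ)
    (hcomp : IsCompact {z : Euc d | Φ z ≤ 0}) (hne : {z : Euc d | Φ z ≤ 0}.Nonempty)
    (hgrad : ∀ z : Euc d, Φ z = 0 → gradient Φ z ≠ 0)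
    (hconn : IsConnected {z : Euc d | Φ z < 0})
    (hclos : closure {z : Euc d | Φ z < 0} = {z : Euc d | Φ z ≤ 0})
    (a : ℝ) (ha : 0 < a) (x y : Euc d) (hx : Φ x ≤ 0) (hy : Φ y ≤ 0) :
    min 1 (ENNReal.ofReal (1 / a)) * (dGeo {z : Euc d | Φ z ≤ 0} x y) ^ 2
        ≤ 2 * daSq Φ a x y ∧
    2 * daSq Φ a x y
        ≤ max 1 (ENNReal.ofReal (1 / a)) * (dGeo {z : Euc d | Φ z ≤ 0} x y) ^ 2 :=
  stmt5_general Φ hΦ a ha x y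
end
end

section
/- With the domain setup below, for every Lipschitz path X in Ω from x to y and every ε > 0, there exists a Lipschitz path Y in Ω from x to y such that Y(t) ∈ Ω° (the open interior) for all t ∈ (0,1) and ∫₀¹ ‖Y'(t)‖² dt ≤ ∫₀¹ ‖X'(t)‖² dt + ε. -/
open MeasureTheory Set
open scoped ENNReal

noncomputable section

/-!
Push the path inward along the gradient: `Y t = X t - δ t (1 - t) ∇Φ (X t)`. The continuous
function `‖∇Φ‖² - Φ` is positive on the compact set `Ω` (as `∇Φ ≠ 0` on `∂Ω`), hence bounded
below by some `c > 0`; together with the second-order Taylor bound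
`Φ (z - s ∇Φ z) ≤ Φ z - s ‖∇Φ z‖² + L s² ‖∇Φ z‖²` this makes `Φ (z - s ∇Φ z) < 0` for every
`z ∈ Ω` and every small `s > 0`. The correction term is Lipschitz with constant `O(δ)`, so it
raises the energy by `O(δ)`.
-/

open Filter Topology InnerProductSpace
open scoped NNReal Gradient

section Taylor

variable {E F : Type*} [NormedAddCommGroup E] [NormedSpace ℝ E]
  [NormedAddCommGroup F] [NormedSpace ℝ F]

theorem norm_image_sub_sub_fderiv_le_of_lipschitzOnWith {f : E → F} {f' : E → E →L[ℝ] F}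
    {x y : E} {L : ℝ≥0} (hf : ∀ u ∈ segment ℝ x y, HasFDerivAt f (f' u) u)
    (hf' : LipschitzOnWith L f' (segment ℝ x y)) :
    ‖f y - f x - f' x (y - x)‖ ≤ L * ‖y - x‖ ^ 2 := by
  have hx : x ∈ segment ℝ x y := left_mem_segment ℝ x y
  have hy : y ∈ segment ℝ x y := right_mem_segment ℝ x y
  have bound : ∀ u ∈ segment ℝ x y, ‖f' u - f' x‖ ≤ L * ‖y - x‖ := fun u hu => by
    rw [← dist_eq_norm, ← dist_eq_norm']
    exact (hf'.dist_le_mul u hu x hx).trans <| mul_le_mul_of_nonneg_left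
      (by simpa [dist_comm] using segment_subset_closedBall_left x y hu) L.coe_nonneg
  have := (convex_segment x y).norm_image_sub_le_of_norm_hasFDerivWithin_le
    (f := fun u => f u - f' x u)
    (fun u hu => ((hf u hu).sub (f' x).hasFDerivAt).hasFDerivWithinAt) bound hx hy
  rw [(f' x).map_sub, sq, ← mul_assoc]
  convert this using 2
  abel

end Taylor

section GradientPush

variable {E : Type*} [NormedAddCommGroup E] [InnerProductSpace ℝ E] [CompleteSpace E]
  {Φ : E → ℝ}

theorem ContDiff.locallyLipschitz_gradient (hΦ : ContDiff ℝ 2 Φ) : LocallyLipschitz (∇ Φ) :=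
  (toDual ℝ E).symm.lipschitz.locallyLipschitz.comp
    (hΦ.fderiv_right (m := 1) (by norm_num)).locallyLipschitz

theorem exists_pos_forall_sub_smul_gradient_neg (hΦ : ContDiff ℝ 2 Φ)
    (hcomp : IsCompact {z | Φ z ≤ 0}) (hgrad : ∀ z, Φ z = 0 → ∇ Φ z ≠ 0) :
    ∃ δ₀ > (0 : ℝ), ∀ z, Φ z ≤ 0 → ∀ s ∈ Ioc 0 δ₀, Φ (z - s • ∇ Φ z) < 0 := by
  have hΦc : Continuous Φ := hΦ.continuous
  have hgradc : Continuous (∇ Φ) := hΦ.locallyLipschitz_gradient.continuous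
  obtain ⟨c, hc, hcle⟩ : ∃ c > 0, ∀ z ∈ {z | Φ z ≤ 0}, c ≤ ‖∇ Φ z‖ ^ 2 - Φ z := by
    refine hcomp.exists_forall_le' (by fun_prop) fun z hz => ?_
    rcases (show Φ z ≤ 0 from hz).lt_or_eq with h | h
    · linarith [sq_nonneg ‖∇ Φ z‖]
    · rw [h, sub_zero]; exact pow_pos (norm_pos_iff.2 (hgrad z h)) 2
  obtain ⟨M, hM⟩ := hcomp.exists_bound_of_continuousOn hgradc.continuousOn
  -- `fderiv Φ` is Lipschitz on this compact set, which contains the segments `[z, z - s ∇Φ z]`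
  set T := (fun p : E × ℝ => p.1 - p.2 • ∇ Φ p.1) '' ({z | Φ z ≤ 0} ×ˢ Icc 0 1)
  have hT : IsCompact T := (hcomp.prod isCompact_Icc).image (by fun_prop)
  obtain ⟨L, hL⟩ := (hΦ.fderiv_right (m := 1) (by norm_num)).locallyLipschitz
    |>.locallyLipschitzOn.exists_lipschitzOnWith_of_compact hT
  refine ⟨min 1 (c / (L * M ^ 2 + 1)), by positivity, fun z hz s hs => ?_⟩
  have hs1 : s ≤ 1 := hs.2.trans (min_le_left _ _)
  have hsc : s * (L * M ^ 2 + 1) ≤ c :=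
    (le_div_iff₀ (by positivity)).1 (hs.2.trans (min_le_right _ _))
  have hseg : segment ℝ z (z - s • ∇ Φ z) ⊆ T := by
    rw [segment_eq_image']
    rintro _ ⟨θ, hθ, rfl⟩
    refine ⟨(z, θ * s), ⟨hz, mul_nonneg hθ.1 hs.1.le, mul_le_one₀ hθ.2 hs.1.le hs1⟩, ?_⟩
    simp only [sub_sub_cancel_left, smul_neg, mul_smul]
    abel
  have hTaylor := norm_image_sub_sub_fderiv_le_of_lipschitzOnWith
    (fun u _ => (hΦ.differentiable (by norm_num) u).hasFDerivAt) (hL.mono hseg)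
  rw [sub_sub_cancel_left, ← inner_gradient_left, norm_neg, norm_smul, inner_neg_right,
    inner_smul_right, real_inner_self_eq_norm_sq, Real.norm_of_nonneg hs.1.le,
    Real.norm_eq_abs] at hTaylor
  have hM2 : ‖∇ Φ z‖ ^ 2 ≤ M ^ 2 := pow_le_pow_left₀ (norm_nonneg _) (hM z hz) 2
  -- `Φ (z - s ∇Φ z) ≤ s Φ z - s ‖∇Φ z‖² + L s² M² ≤ -s c + L s² M² ≤ -s²`
  linarith [(abs_le.1 hTaylor).2, mul_nonneg (sub_nonneg.2 hs1) (neg_nonneg.2 hz),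
    mul_le_mul_of_nonneg_left (hcle z hz) hs.1.le,
    mul_le_mul_of_nonneg_left hM2 (by positivity : (0:ℝ) ≤ L * s ^ 2),
    mul_le_mul_of_nonneg_left hsc hs.1.le, pow_pos hs.1 2]

end GradientPush

theorem LocallyLipschitz.smul {α 𝕜 E : Type*} [PseudoMetricSpace α] [RCLike 𝕜]
    [NormedAddCommGroup E] [NormedSpace 𝕜 E] {f : α → 𝕜} {g : α → E}
    (hf : LocallyLipschitz f) (hg : LocallyLipschitz g) : LocallyLipschitz fun x => f x • g x :=
  (contDiff_smul (𝕜 := 𝕜) (n := 1)).locallyLipschitz.comp (hf.prodMk hg)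

theorem LocallyLipschitz.exists_lipschitzWith_IccExtend {α : Type*} [PseudoMetricSpace α]
    {f : ℝ → α} (hf : LocallyLipschitz f) {a b : ℝ} (h : a ≤ b) :
    ∃ K, LipschitzWith K (IccExtend h (f ∘ (↑))) := by
  obtain ⟨K, hK⟩ := hf.locallyLipschitzOn.exists_lipschitzOnWith_of_compact isCompact_Icc
  exact ⟨K * 1, hK.to_restrict.comp (LipschitzWith.projIcc h)⟩

section PushInward

variable {E : Type*} [NormedAddCommGroup E] [InnerProductSpace ℝ E] [CompleteSpace E]
  {Φ : E → ℝ} {X : ℝ → E} {K : ℝ≥0}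

def pushInward (Φ : E → ℝ) (δ : ℝ) (X : ℝ → E) : ℝ → E :=
  IccExtend zero_le_one fun t : Icc (0 : ℝ) 1 => X t - (δ * (t * (1 - t))) • ∇ Φ (X t)

theorem pushInward_of_mem_Icc {δ t : ℝ} (ht : t ∈ Icc (0 : ℝ) 1) :
    pushInward Φ δ X t = X t - (δ * (t * (1 - t))) • ∇ Φ (X t) :=
  IccExtend_of_mem _ _ ht

theorem exists_pos_forall_pushInward_neg (hΦ : ContDiff ℝ 2 Φ)
    (hcomp : IsCompact {z | Φ z ≤ 0}) (hgrad : ∀ z, Φ z = 0 → ∇ Φ z ≠ 0) :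
    ∃ δ₀ > (0 : ℝ), ∀ δ ∈ Ioc 0 δ₀, ∀ X : ℝ → E, (∀ t ∈ Icc (0 : ℝ) 1, Φ (X t) ≤ 0) →
      ∀ t ∈ Ioo (0 : ℝ) 1, Φ (pushInward Φ δ X t) < 0 := by
  obtain ⟨δ₀, hδ₀, hpush⟩ := exists_pos_forall_sub_smul_gradient_neg hΦ hcomp hgrad
  refine ⟨δ₀, hδ₀, fun δ hδ X hX t ht => ?_⟩
  rw [pushInward_of_mem_Icc (Ioo_subset_Icc_self ht)]
  refine hpush _ (hX t (Ioo_subset_Icc_self ht)) _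
    ⟨mul_pos hδ.1 (mul_pos ht.1 (sub_pos.2 ht.2)), ?_⟩
  exact (mul_le_of_le_one_right hδ.1.le (by nlinarith [ht.1, ht.2])).trans hδ.2

theorem exists_lipschitzWith_pushInward (hΦ : ContDiff ℝ 2 Φ) (hX : LipschitzWith K X) (δ : ℝ) :
    ∃ C, LipschitzWith C (pushInward Φ δ X) :=
  (hX.locallyLipschitz.sub (LocallyLipschitz.smul
    (by fun_prop : ContDiff ℝ 1 fun t : ℝ => δ * (t * (1 - t))).locallyLipschitz
    (hΦ.locallyLipschitz_gradient.comp hX.locallyLipschitz))).exists_lipschitzWith_IccExtend _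

end PushInward

section Energy

variable {d : ℕ}

theorem pathEnergy_congr {X X' : ℝ → Euc d} (h : EqOn X X' (Ioo 0 1)) :
    pathEnergy X = pathEnergy X' :=
  setLIntegral_congr_fun measurableSet_Ioo fun t ht => by
    rw [(h.eventuallyEq_of_mem (Ioo_mem_nhds ht.1 ht.2)).deriv_eq]

theorem pathEnergy_sub_le {X Z : ℝ → Euc d} {K C : ℝ≥0} (hX : LipschitzWith K X)
    (hZ : LipschitzWith C Z) :
    pathEnergy (X - Z) ≤ pathEnergy X + ENNReal.ofReal (2 * K * C + C ^ 2) := by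
  have hpt : ∀ᵐ t ∂volume.restrict (Ioo (0:ℝ) 1), ENNReal.ofReal (‖deriv (X - Z) t‖ ^ 2) ≤
      ENNReal.ofReal (‖deriv X t‖ ^ 2) + ENNReal.ofReal (2 * K * C + C ^ 2) := by
    filter_upwards [ae_restrict_of_ae hX.ae_differentiableAt_real,
      ae_restrict_of_ae hZ.ae_differentiableAt_real] with t hXt hZt
    rw [← ENNReal.ofReal_add (sq_nonneg _) (by positivity), deriv_sub hXt hZt]
    refine ENNReal.ofReal_le_ofReal ?_
    have hX' : ‖deriv X t‖ ≤ K := norm_deriv_le_of_lipschitz hX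
    have hZ' : ‖deriv Z t‖ ≤ C := norm_deriv_le_of_lipschitz hZ
    linarith [pow_le_pow_left₀ (norm_nonneg _) (norm_sub_le (deriv X t) (deriv Z t)) 2,
      mul_le_mul hX' hZ' (norm_nonneg _) K.coe_nonneg, pow_le_pow_left₀ (norm_nonneg _) hZ' 2]
  calc pathEnergy (X - Z)
      ≤ ∫⁻ t in Ioo (0:ℝ) 1, (ENNReal.ofReal (‖deriv X t‖ ^ 2) +
          ENNReal.ofReal (2 * K * C + C ^ 2)) := lintegral_mono_ae hpt
    _ = pathEnergy X + ENNReal.ofReal (2 * K * C + C ^ 2) := by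
      rw [lintegral_add_right _ measurable_const, setLIntegral_const, Real.volume_Ioo]
      simp [pathEnergy]

theorem eventually_pathEnergy_pushInward_le {Φ : Euc d → ℝ} {X : ℝ → Euc d} {K : ℝ≥0}
    (hΦ : ContDiff ℝ 2 Φ) (hX : LipschitzWith K X) {ε : ℝ} (hε : 0 < ε) :
    ∀ᶠ δ in 𝓝 0, pathEnergy (pushInward Φ δ X) ≤ pathEnergy X + ENNReal.ofReal ε := by
  set Z := IccExtend zero_le_one fun t : Icc (0 : ℝ) 1 => ((t : ℝ) * (1 - t)) • ∇ Φ (X t)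
  obtain ⟨KX, hX'⟩ := hX.locallyLipschitz.exists_lipschitzWith_IccExtend zero_le_one
  obtain ⟨C, hZ⟩ := (LocallyLipschitz.smul
    (by fun_prop : ContDiff ℝ 1 fun t : ℝ => t * (1 - t)).locallyLipschitz
    (hΦ.locallyLipschitz_gradient.comp hX.locallyLipschitz)).exists_lipschitzWith_IccExtend
      zero_le_one
  have hsplit (δ : ℝ) : pushInward Φ δ X = IccExtend zero_le_one (X ∘ (↑)) - δ • Z := by
    ext1 t; simp [pushInward, Z, IccExtend_apply, mul_smul]
  have hclamp : pathEnergy (IccExtend zero_le_one (X ∘ (↑))) = pathEnergy X :=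
    pathEnergy_congr fun t ht => IccExtend_of_mem _ _ (Ioo_subset_Icc_self ht)
  filter_upwards [(by fun_prop : Continuous fun δ : ℝ => 2 * KX * (‖δ‖ * C) + (‖δ‖ * C) ^ 2)
    |>.continuousAt.eventually_lt continuousAt_const (by simpa using hε)] with δ hδ
  calc pathEnergy (pushInward Φ δ X)
      ≤ pathEnergy X + ENNReal.ofReal (2 * KX * (‖δ‖ * C) + (‖δ‖ * C) ^ 2) := by
        have hδZ : LipschitzWith (‖δ‖₊ * C) (δ • Z) := (lipschitzWith_smul δ).comp hZ
        simpa [hsplit, hclamp] using pathEnergy_sub_le hX' hδZ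
    _ ≤ pathEnergy X + ENNReal.ofReal ε := by gcongr

end Energy

theorem stmt10_general {d : ℕ} (Φ : Euc d → ℝ) (hΦ : ContDiff ℝ (⊤ : ℕ∞) Φ)
    (hcomp : IsCompact {z : Euc d | Φ z ≤ 0})
    (hgrad : ∀ z : Euc d, Φ z = 0 → gradient Φ z ≠ 0)
    (x y : Euc d) (X : ℝ → Euc d) (hX : IsPathIn {z : Euc d | Φ z ≤ 0} x y X)
    (ε : ℝ) (hε : 0 < ε) :
    ∃ Y : ℝ → Euc d, IsPathIn {z : Euc d | Φ z ≤ 0} x y Y ∧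
      (∀ t ∈ Ioo (0:ℝ) 1, Φ (Y t) < 0) ∧
      pathEnergy Y ≤ pathEnergy X + ENNReal.ofReal ε := by
  have hΦ2 : ContDiff ℝ 2 Φ := hΦ.of_le (WithTop.coe_le_coe.2 le_top)
  obtain ⟨δ₀, hδ₀, hneg⟩ := exists_pos_forall_pushInward_neg hΦ2 hcomp hgrad
  obtain ⟨⟨K, hK⟩, hmem, rfl, rfl⟩ := hX
  obtain ⟨δ, ⟨hδδ₀, henergy⟩, hδ⟩ : ∃ δ, (δ ≤ δ₀ ∧
      pathEnergy (pushInward Φ δ X) ≤ pathEnergy X + ENNReal.ofReal ε) ∧ 0 < δ :=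
    ((eventually_le_nhds hδ₀).and (eventually_pathEnergy_pushInward_le hΦ2 hK hε)
      |> eventually_nhdsWithin_of_eventually_nhds |>.and self_mem_nhdsWithin).exists (f := 𝓝[>] 0)
  have hint := hneg δ ⟨hδ, hδδ₀⟩ X hmem
  refine ⟨pushInward Φ δ X, ⟨exists_lipschitzWith_pushInward hΦ2 hK δ, fun t ht => ?_,
    by simp [pushInward_of_mem_Icc], by simp [pushInward_of_mem_Icc]⟩, hint, henergy⟩
  rcases eq_endpoints_or_mem_Ioo_of_mem_Icc ht with rfl | rfl | ht'
  · simpa [pushInward_of_mem_Icc] using hmem 0 (by simp)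
  · simpa [pushInward_of_mem_Icc] using hmem 1 (by simp)
  · exact (hint t ht').le

/-- With the smooth compact domain setup, every Lipschitz path in `Ω`
from `x` to `y` can be approximated, at arbitrarily small extra energy cost, by a
Lipschitz path with the same endpoints running in the open interior `Ω°` for all
`t ∈ (0,1)`. -/
theorem stmt10 {d : ℕ} (hd : 2 ≤ d) (Φ : Euc d → ℝ) (hΦ : ContDiff ℝ (⊤ : ℕ∞) Φ)
    (hcomp : IsCompact {z : Euc d | Φ z ≤ 0}) (hne : {z : Euc d | Φ z ≤ 0}.Nonempty)
    (hgrad : ∀ z : Euc d, Φ z = 0 → gradient Φ z ≠ 0)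
    (hconn : IsConnected {z : Euc d | Φ z < 0})
    (hclos : closure {z : Euc d | Φ z < 0} = {z : Euc d | Φ z ≤ 0})
    (x y : Euc d) (X : ℝ → Euc d) (hX : IsPathIn {z : Euc d | Φ z ≤ 0} x y X)
    (ε : ℝ) (hε : 0 < ε) :
    ∃ Y : ℝ → Euc d, IsPathIn {z : Euc d | Φ z ≤ 0} x y Y ∧
      (∀ t ∈ Ioo (0:ℝ) 1, Φ (Y t) < 0) ∧
      pathEnergy Y ≤ pathEnergy X + ENNReal.ofReal ε :=
  stmt10_general Φ hΦ hcomp hgrad x y X hX ε hε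
end
end
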